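/- Non-commutative union bound: let σ be a positive semidefinite d × d matrix with Tr{σ} ≤ 1, and let Π₁, …, Π_N be d × d orthogonal projections (Hermitian idempotent matrices). Then Tr{σ} − Tr{Π_N ⋯ Π₁ σ Π₁ ⋯ Π_N} ≤ 2 √( Σ_{i=1}^N Tr{(I − Π_i) σ} ). -/

import Mathlib

/-!
Write `σ = C Cᴴ` and regard matrices as vectors of the Hilbert–Schmidt space, in which left
multiplication by `Πᵢ` is an orthogonal projection `pᵢ`. With `Q = Π_N ⋯ Π₁` we get `Tr σ = ‖C‖²`,
`Tr{Q σ Qᴴ} = ‖Q C‖²` and `Tr{(I - Πᵢ) σ} = ‖C - pᵢ C‖²`. For orthogonal projections `p, q`, the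
decomposition `x - p q x = (x - p x) + p (x - q x)` is orthogonal and `p` is a contraction, so by
induction `‖x - p_N ⋯ p₁ x‖² ≤ ∑ᵢ ‖x - pᵢ x‖²`. Finally `‖a‖² - ‖b‖² ≤ 2 ‖a‖ ‖a - b‖`, and
`‖C‖² = Tr σ ≤ 1`.
-/

open scoped InnerProductSpace ComplexOrder

theorem sq_norm_sub_sq_norm_le {E : Type*} [SeminormedAddCommGroup E] (a b : E) :
    ‖a‖ ^ 2 - ‖b‖ ^ 2 ≤ 2 * ‖a‖ * ‖a - b‖ := by
  rcases le_total ‖b‖ ‖a‖ with hba | hab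
  · have h := norm_sub_norm_le a b
    nlinarith [norm_nonneg b]
  · nlinarith [norm_nonneg a, norm_nonneg (a - b)]

namespace LinearMap.IsSymmetricProjection

variable {𝕜 E : Type*} [RCLike 𝕜] [NormedAddCommGroup E] [InnerProductSpace 𝕜 E]
  {p : E →ₗ[𝕜] E}

theorem inner_sub_apply_apply_eq_zero (hp : p.IsSymmetricProjection) (x y : E) :
    ⟪x - p x, p y⟫_𝕜 = 0 := by
  rw [inner_sub_left, hp.isSymmetric x (p y), ← Module.End.mul_apply, hp.isIdempotentElem.eq,
    sub_self]

theorem norm_apply_le (hp : p.IsSymmetricProjection) (x : E) : ‖p x‖ ≤ ‖x‖ := by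
  have h : ⟪p x, p x⟫_𝕜 = ⟪x, p x⟫_𝕜 := by
    rw [← sub_eq_zero, ← inner_sub_left, ← neg_sub, inner_neg_left,
      hp.inner_sub_apply_apply_eq_zero, neg_zero]
  have hsq : ‖p x‖ ^ 2 ≤ ‖x‖ * ‖p x‖ := by
    rw [← inner_self_eq_norm_sq (𝕜 := 𝕜), h]
    exact (RCLike.re_le_norm _).trans (norm_inner_le_norm _ _)
  nlinarith [norm_nonneg (p x), norm_nonneg x]

theorem norm_sub_list_prod_apply_sq_le (l : List (E →ₗ[𝕜] E))
    (hl : ∀ p ∈ l, p.IsSymmetricProjection) (x : E) :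
    ‖x - l.prod x‖ ^ 2 ≤ (l.map fun p => ‖x - p x‖ ^ 2).sum := by
  induction l with
  | nil => simp
  | cons p l ih =>
    have hp := hl p List.mem_cons_self
    have hdecomp : x - (p :: l).prod x = (x - p x) + p (x - l.prod x) := by
      simp only [List.prod_cons, Module.End.mul_apply, map_sub]
      abel
    rw [hdecomp, @norm_add_sq 𝕜, hp.inner_sub_apply_apply_eq_zero, map_zero, mul_zero, add_zero,
      List.map_cons, List.sum_cons]
    gcongr
    exact (pow_le_pow_left₀ (norm_nonneg _) (hp.norm_apply_le _) 2).trans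
      (ih fun q hq => hl q (List.mem_cons_of_mem p hq))

end LinearMap.IsSymmetricProjection

namespace Matrix

variable {𝕜 k m n : Type*} [RCLike 𝕜]

def toHilbertSchmidt : Matrix m n 𝕜 ≃ₗ[𝕜] EuclideanSpace 𝕜 (m × n) :=
  (ofLinearEquiv 𝕜).symm ≪≫ₗ (LinearEquiv.curry 𝕜 𝕜 m n).symm ≪≫ₗ
    (WithLp.linearEquiv 2 𝕜 (m × n → 𝕜)).symm

@[simp]
theorem toHilbertSchmidt_apply (X : Matrix m n 𝕜) (p : m × n) :
    toHilbertSchmidt X p = X p.1 p.2 := rfl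

variable [Fintype m] [Fintype n]

theorem inner_toHilbertSchmidt (X Y : Matrix m n 𝕜) :
    ⟪toHilbertSchmidt X, toHilbertSchmidt Y⟫_𝕜 = (Xᴴ * Y).trace := by
  simp only [PiLp.inner_apply, toHilbertSchmidt_apply, RCLike.inner_apply, trace, diag, mul_apply,
    conjTranspose_apply, Fintype.sum_prod_type]
  rw [Finset.sum_comm]
  exact Finset.sum_congr rfl fun _ _ => Finset.sum_congr rfl fun _ _ => mul_comm _ _

theorem norm_toHilbertSchmidt_sq (X : Matrix m n 𝕜) :
    ‖toHilbertSchmidt X‖ ^ 2 = RCLike.re (Xᴴ * X).trace := by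
  rw [← inner_toHilbertSchmidt, inner_self_eq_norm_sq]

theorem re_trace_mul_mul_conjTranspose [Fintype k] (M : Matrix k m 𝕜) (C : Matrix m n 𝕜) :
    RCLike.re (M * (C * Cᴴ) * Mᴴ).trace = ‖toHilbertSchmidt (M * C)‖ ^ 2 := by
  rw [norm_toHilbertSchmidt_sq, trace_mul_comm (M * C)ᴴ, conjTranspose_mul]
  simp only [Matrix.mul_assoc]

theorem trace_mul_mul_conjTranspose_of_isIdempotentElem {M : Matrix n n 𝕜} (hM : M.IsHermitian)
    (hM2 : IsIdempotentElem M) (S : Matrix n n 𝕜) : (M * S * Mᴴ).trace = (M * S).trace := by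
  rw [hM.eq, trace_mul_comm, ← Matrix.mul_assoc, hM2.eq]

variable [DecidableEq n]

def hilbertSchmidtMulLeft : Matrix n n 𝕜 →+* Module.End 𝕜 (EuclideanSpace 𝕜 (n × n)) :=
  (toHilbertSchmidt.conjRingEquiv : Module.End 𝕜 (Matrix n n 𝕜) ≃+* _).toRingHom.comp
    (Algebra.lmul 𝕜 (Matrix n n 𝕜)).toRingHom

theorem hilbertSchmidtMulLeft_toHilbertSchmidt (M X : Matrix n n 𝕜) :
    hilbertSchmidtMulLeft M (toHilbertSchmidt X) = toHilbertSchmidt (M * X) := by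
  simp [hilbertSchmidtMulLeft, LinearEquiv.conjRingEquiv]

theorem isSymmetricProjection_hilbertSchmidtMulLeft {M : Matrix n n 𝕜} (hM : M.IsHermitian)
    (hM2 : IsIdempotentElem M) : (hilbertSchmidtMulLeft M).IsSymmetricProjection where
  isIdempotentElem := hM2.map hilbertSchmidtMulLeft
  isSymmetric x y := by
    obtain ⟨X, rfl⟩ := toHilbertSchmidt.surjective x
    obtain ⟨Y, rfl⟩ := toHilbertSchmidt.surjective y
    rw [hilbertSchmidtMulLeft_toHilbertSchmidt, hilbertSchmidtMulLeft_toHilbertSchmidt,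
      inner_toHilbertSchmidt, inner_toHilbertSchmidt, conjTranspose_mul, hM.eq, Matrix.mul_assoc]

theorem norm_toHilbertSchmidt_sub_mul_sq {M : Matrix n n 𝕜} (hM : M.IsHermitian)
    (hM2 : IsIdempotentElem M) (C : Matrix n n 𝕜) :
    ‖toHilbertSchmidt C - toHilbertSchmidt (M * C)‖ ^ 2 = RCLike.re ((1 - M) * (C * Cᴴ)).trace := by
  have hsub : C - M * C = (1 - M) * C := by rw [sub_mul, Matrix.one_mul]
  rw [← map_sub, hsub, ← re_trace_mul_mul_conjTranspose,
    trace_mul_mul_conjTranspose_of_isIdempotentElem (isHermitian_one.sub hM) hM2.one_sub]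

theorem norm_toHilbertSchmidt_sub_list_prod_mul_sq_le {ι : Type*} (P : ι → Matrix n n 𝕜)
    (hP : ∀ i, (P i).IsHermitian) (hP2 : ∀ i, IsIdempotentElem (P i)) (l : List ι)
    (C : Matrix n n 𝕜) :
    ‖toHilbertSchmidt C - toHilbertSchmidt ((l.map P).prod * C)‖ ^ 2 ≤
      (l.map fun i => RCLike.re ((1 - P i) * (C * Cᴴ)).trace).sum := by
  have hprod : (l.map (hilbertSchmidtMulLeft ∘ P)).prod (toHilbertSchmidt C) =
      toHilbertSchmidt ((l.map P).prod * C) := by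
    rw [← List.map_map, ← map_list_prod, hilbertSchmidtMulLeft_toHilbertSchmidt]
  have key := LinearMap.IsSymmetricProjection.norm_sub_list_prod_apply_sq_le
    (l.map (hilbertSchmidtMulLeft ∘ P))
    (fun _ hp => by
      obtain ⟨i, -, rfl⟩ := List.mem_map.mp hp
      exact isSymmetricProjection_hilbertSchmidtMulLeft (hP i) (hP2 i))
    (toHilbertSchmidt C)
  rw [hprod, List.map_map] at key
  refine key.trans_eq (congrArg List.sum (List.map_congr_left fun i _ => ?_))
  rw [Function.comp_apply, Function.comp_apply, hilbertSchmidtMulLeft_toHilbertSchmidt,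
    norm_toHilbertSchmidt_sub_mul_sq (hP i) (hP2 i)]

theorem conjTranspose_list_prod_map_reverse {ι : Type*} (P : ι → Matrix n n 𝕜)
    (hP : ∀ i, (P i).IsHermitian) (l : List ι) : ((l.reverse.map P).prod)ᴴ = (l.map P).prod := by
  rw [conjTranspose_list_prod, List.map_map, List.map_reverse, List.reverse_reverse]
  exact congrArg List.prod (List.map_congr_left fun i _ => (hP i).eq)

theorem PosSemidef.exists_eq_mul_conjTranspose {A : Matrix n n 𝕜} (hA : A.PosSemidef) :
    ∃ C : Matrix n n 𝕜, A = C * Cᴴ := by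
  open scoped MatrixOrder in
  obtain ⟨B, rfl⟩ := CStarAlgebra.nonneg_iff_eq_star_mul_self.mp hA.nonneg
  exact ⟨Bᴴ, by rw [conjTranspose_conjTranspose, star_eq_conjTranspose]⟩

end Matrix

open Matrix in
theorem noncommutative_union_bound {d N : ℕ}
    (σ : Matrix (Fin d) (Fin d) ℂ) (hσ : σ.PosSemidef) (hσtr : (σ.trace).re ≤ 1)
    (P : Fin N → Matrix (Fin d) (Fin d) ℂ)
    (hP : ∀ i, (P i).IsHermitian) (hP2 : ∀ i, P i * P i = P i) :
    (σ.trace).re -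
      (((((List.finRange N).reverse.map P).prod) * σ *
          (((List.finRange N).map P).prod)).trace).re ≤
    2 * Real.sqrt (∑ i, (((1 - P i) * σ).trace).re) := by
  obtain ⟨C, rfl⟩ := hσ.exists_eq_mul_conjTranspose
  set Q := ((List.finRange N).reverse.map P).prod
  set x := toHilbertSchmidt C
  have hx : ‖x‖ ^ 2 = (C * Cᴴ).trace.re := by
    rw [norm_toHilbertSchmidt_sq, trace_mul_comm, RCLike.re_to_complex]
  have hQx : ‖toHilbertSchmidt (Q * C)‖ ^ 2 = (Q * (C * Cᴴ) * Qᴴ).trace.re := by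
    rw [← re_trace_mul_mul_conjTranspose Q C, RCLike.re_to_complex]
  have hdist : ‖x - toHilbertSchmidt (Q * C)‖ ^ 2 ≤ ∑ i, ((1 - P i) * (C * Cᴴ)).trace.re := by
    have h := norm_toHilbertSchmidt_sub_list_prod_mul_sq_le P hP hP2 (List.finRange N).reverse C
    rwa [((List.reverse_perm _).map _).sum_eq, ← Fin.sum_univ_def] at h
  have hx1 : ‖x‖ ≤ 1 := by nlinarith [norm_nonneg x]
  rw [← conjTranspose_list_prod_map_reverse P hP, ← hx, ← hQx]
  calc ‖x‖ ^ 2 - ‖toHilbertSchmidt (Q * C)‖ ^ 2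
      ≤ 2 * ‖x‖ * ‖x - toHilbertSchmidt (Q * C)‖ := sq_norm_sub_sq_norm_le _ _
    _ ≤ 2 * 1 * √(∑ i, ((1 - P i) * (C * Cᴴ)).trace.re) := by
      gcongr
      exact Real.le_sqrt_of_sq_le hdist
    _ = _ := by rw [mul_one]
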